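/- Let (C,R) be a directed graph with ℓ = t = 1 that is not strongly connected and has |C'| = 1, and fix j ∈ C''. Then W(j) = {i ∈ C'' : there exist a directed path P_j from i to j and a directed path P_{C'} from i to C' such that the vertex sets of P_j and P_{C'} intersect exactly in {i}}. -/

import Mathlib

open Finset

/-- Reachability (existence of a directed walk) in the directed graph with arc set `R`. -/
def Reach {c : ℕ} (R : Finset (Fin c × Fin c)) (a b : Fin c) : Prop :=
  Relation.ReflTransGen (fun x y => (x, y) ∈ R) a b

/-- `p` is a directed path in the graph with arc set `R`. -/
def IsDipath {c : ℕ} (R : Finset (Fin c × Fin c)) (p : List (Fin c)) : Prop :=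
  p ≠ [] ∧ p.Nodup ∧ p.Chain' (fun a b => (a, b) ∈ R)

/-- `p` is a directed path from `a` to `b` in the graph with arc set `R`. -/
def IsDipathFromTo {c : ℕ} (R : Finset (Fin c × Fin c)) (p : List (Fin c))
    (a b : Fin c) : Prop :=
  IsDipath R p ∧ p.head? = some a ∧ p.getLast? = some b

/-- There is a directed path from `a` to `b` all of whose intermediate steps stay in `S`
(for `a ∈ S` this says that there is a directed path from `a` to `b` with vertex set
contained in `S`). -/
def ReachIn {c : ℕ} (R : Finset (Fin c × Fin c)) (S : Finset (Fin c))
    (a b : Fin c) : Prop :=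
  Relation.ReflTransGen (fun x y => (x, y) ∈ R ∧ x ∈ S ∧ y ∈ S) a b

/-- The set of arcs of `R` entering the vertex set `U`. -/
def arcsIn {c : ℕ} (R : Finset (Fin c × Fin c)) (U : Finset (Fin c)) :
    Finset (Fin c × Fin c) :=
  R.filter (fun a => a.1 ∉ U ∧ a.2 ∈ U)

/-- The set of arcs of `R` leaving the vertex set `U`. -/
def arcsOut {c : ℕ} (R : Finset (Fin c × Fin c)) (U : Finset (Fin c)) :
    Finset (Fin c × Fin c) :=
  R.filter (fun a => a.1 ∈ U ∧ a.2 ∉ U)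

/-- For a graph whose unique absorbing strong component is `{r}` (so `C'' = C \ {r}`),
`Uset R r i = U(i) = {k ∈ C : every directed path from k to r traverses i}`. -/
noncomputable def Uset {c : ℕ} (R : Finset (Fin c × Fin c)) (r i : Fin c) :
    Finset (Fin c) :=
  @Finset.filter _ (fun k => ∀ p : List (Fin c), IsDipathFromTo R p k r → i ∈ p)
    (Classical.decPred _) Finset.univ

/-- `U ∈ C''_{j-inarb}`: `U ⊆ C'' = C \ {r}`, every vertex of `U` has a directed path to
`j` with vertex set contained in `U`, and every vertex of `C'' \ U` has a directed path
to `C' = {r}` with vertex set contained in `C \ U`. -/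
def Jinarb {c : ℕ} (R : Finset (Fin c × Fin c)) (r j : Fin c)
    (U : Finset (Fin c)) : Prop :=
  U ⊆ Finset.univ.erase r ∧
    (∀ i' ∈ U, ReachIn R U i' j) ∧
    (∀ i' ∈ Finset.univ.erase r \ U, ReachIn R (Finset.univ \ U) i' r)

/-- The vertex set of the strong component of the graph containing `j`. -/
noncomputable def SCC {c : ℕ} (R : Finset (Fin c × Fin c)) (j : Fin c) :
    Finset (Fin c) :=
  @Finset.filter _ (fun k => Reach R j k ∧ Reach R k j) (Classical.decPred _) Finset.univ

/-- `I` is a subset of `C'' = C \ {r}` such that the sets `U(i)`, `i ∈ I`, are pairwise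
disjoint with union `U`. -/
def IsPartitionInto {c : ℕ} (R : Finset (Fin c × Fin c)) (r : Fin c)
    (U I : Finset (Fin c)) : Prop :=
  I ⊆ Finset.univ.erase r ∧
    (↑I : Set (Fin c)).PairwiseDisjoint (fun i => Uset R r i) ∧
    U = I.biUnion (Uset R r)

/-- `W(j) = ⋃_{U ∈ C''_{j-inarb}} I_U`, where `I_U` is the unique subset of `C''` with
`U = ⋃*_{i ∈ I_U} U(i)` (pairwise disjoint union). -/
def Wset {c : ℕ} (R : Finset (Fin c × Fin c)) (r j : Fin c) : Set (Fin c) :=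
  {i | ∃ U I : Finset (Fin c), Jinarb R r j U ∧ IsPartitionInto R r U I ∧ i ∈ I}

/-- `U(C''(j)) = {k ∈ C'' : every directed path from k to r traverses C''(j)}`. -/
noncomputable def UsetSC {c : ℕ} (R : Finset (Fin c × Fin c)) (r j : Fin c) :
    Finset (Fin c) :=
  @Finset.filter _
    (fun k => ∀ p : List (Fin c), IsDipathFromTo R p k r → ∃ x ∈ p, x ∈ SCC R j)
    (Classical.decPred _) (Finset.univ.erase r)

/-!
Write `U(F)` for the set of vertices all of whose dipaths to `r` meet `F`, so that `U(i) = U({i})`.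

If `i` has dipaths `P_j` to `j` and `P_c` to `r` meeting only in `i`, take `U = U(V(P_j))`. It is a
`j`-in-arborescence set, and its decomposition `I_U` consists of the maximal elements of `U` for
the domination order `k ∈ U(x)`, which is laminar. Because `P_c` leaves `i` without meeting `P_j`
again, `i` is maximal.

Conversely, let `i ∈ I_U`. No vertex `v ≠ i` meets both every dipath from `i` to `j` and every
dipath from `i` to `r`. If `v ∈ U`, then `i ∈ U(v)` would contradict the maximality of `i`. If
`v ∉ U`, then the path from `i` to `j` inside `U` avoids `v`. So Menger's theorem for two paths,
which follows by induction on the number of arcs, gives `P_j` and `P_c`.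
-/

section Walks

variable {c : ℕ} {R R' : Finset (Fin c × Fin c)} {S T : Finset (Fin c)} {a b u v : Fin c}

theorem ReachIn.mono (h : ReachIn R S a b) (hR : R ⊆ R') (hS : S ⊆ T) : ReachIn R' T a b :=
  Relation.ReflTransGen.mono (fun _ _ h' => ⟨hR h'.1, hS h'.2.1, hS h'.2.2⟩) _ _ h

theorem ReachIn.trans {b' : Fin c} (h : ReachIn R S a b) (h' : ReachIn R S b b') :
    ReachIn R S a b' :=
  Relation.ReflTransGen.trans h h'

theorem ReachIn.mem_right (h : ReachIn R S a b) (ha : a ∈ S) : b ∈ S := by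
  induction h with
  | refl => exact ha
  | tail _ hstep _ => exact hstep.2.2

theorem ReachIn.eq_of_notMem (h : ReachIn R S a b) (ha : a ∉ S) : a = b := by
  rcases Relation.ReflTransGen.cases_head h with hab | ⟨_, hstep, _⟩
  · exact hab
  · exact absurd hstep.2.1 ha

theorem ReachIn.eq_of_empty (h : ReachIn ∅ S a b) : a = b := by
  rcases Relation.ReflTransGen.cases_head h with hab | ⟨_, hstep, _⟩
  · exact hab
  · exact absurd hstep.1 (notMem_empty _)

theorem ReachIn.erase_or (h : ReachIn R S a b) (x : Fin c) :
    ReachIn R (S.erase x) a b ∨ ReachIn R S a x ∧ ReachIn R S x b := by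
  induction h using Relation.ReflTransGen.head_induction_on with
  | refl => exact Or.inl .refl
  | @head a' y hstep hrest ih =>
    by_cases hy : y = x
    · subst hy; exact Or.inr ⟨.single hstep, hrest⟩
    by_cases ha : a' = x
    · subst ha; exact Or.inr ⟨.refl, .head hstep hrest⟩
    rcases ih with h | h
    · exact Or.inl (.head ⟨hstep.1, mem_erase.2 ⟨ha, hstep.2.1⟩, mem_erase.2 ⟨hy, hstep.2.2⟩⟩ h)
    · exact Or.inr ⟨.head hstep h.1, h.2⟩

theorem ReachIn.of_insert (h : ReachIn (insert (u, v) R) S a b) :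
    ReachIn R S a b ∨ ReachIn R S a u ∧ ReachIn R S v b := by
  induction h using Relation.ReflTransGen.head_induction_on with
  | refl => exact Or.inl .refl
  | @head a' y hstep hrest ih =>
    rcases mem_insert.1 hstep.1 with he | he
    · obtain ⟨rfl, rfl⟩ := Prod.mk.inj he
      exact Or.inr ⟨.refl, ih.elim id And.right⟩
    · have hstep' : (a', y) ∈ R ∧ a' ∈ S ∧ y ∈ S := ⟨he, hstep.2⟩
      exact ih.imp (.head hstep') (fun h => ⟨.head hstep' h.1, h.2⟩)

end Walks

section Dipaths

variable {c : ℕ} {R : Finset (Fin c × Fin c)} {S : Finset (Fin c)} {a b x y : Fin c}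
  {p q : List (Fin c)}

theorem IsDipathFromTo.nodup (h : IsDipathFromTo R p a b) : p.Nodup := h.1.2.1

theorem IsDipathFromTo.isChain (h : IsDipathFromTo R p a b) :
    p.IsChain (fun x y => (x, y) ∈ R) := h.1.2.2

theorem IsDipathFromTo.head_mem (h : IsDipathFromTo R p a b) : a ∈ p :=
  List.mem_of_mem_head? h.2.1

theorem IsDipathFromTo.last_mem (h : IsDipathFromTo R p a b) : b ∈ p :=
  List.mem_of_getLast? h.2.2

theorem isDipathFromTo_singleton (a : Fin c) : IsDipathFromTo R [a] a a :=
  ⟨⟨List.cons_ne_nil _ _, List.nodup_singleton a, List.isChain_singleton a⟩, rfl, rfl⟩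

theorem IsDipathFromTo.cons (hq : IsDipathFromTo R q y b) (hxy : (x, y) ∈ R) (hx : x ∉ q) :
    IsDipathFromTo R (x :: q) x b := by
  refine ⟨⟨List.cons_ne_nil _ _, List.nodup_cons.2 ⟨hx, hq.nodup⟩,
    hq.isChain.cons fun z hz => ?_⟩, rfl, ?_⟩
  · rw [hq.2.1, Option.mem_some_iff] at hz
    exact hz ▸ hxy
  · rw [List.getLast?_cons, hq.2.2]; rfl

theorem IsDipathFromTo.reachIn (h : IsDipathFromTo R p a b) (hS : ∀ x ∈ p, x ∈ S) :
    ReachIn R S a b := by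
  obtain ⟨⟨hne, -, hc⟩, hh, hl⟩ := h
  rw [List.head?_eq_some_head hne, Option.some.injEq] at hh
  rw [List.getLast?_eq_some_getLast hne, Option.some.injEq] at hl
  exact hh ▸ hl ▸ List.relationReflTransGen_of_exists_isChain p
    (hc.imp_of_mem_imp fun x y hx hy hxy => ⟨hxy, hS x hx, hS y hy⟩) hne

theorem IsDipathFromTo.split {p₁ p₂ : List (Fin c)} (h : IsDipathFromTo R (p₁ ++ x :: p₂) a b) :
    IsDipathFromTo R (p₁ ++ [x]) a x ∧ IsDipathFromTo R (x :: p₂) x b := by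
  have hc := List.isChain_split.1 h.isChain
  obtain ⟨⟨-, hn, -⟩, hh, hl⟩ := h
  refine ⟨⟨⟨by simp, hn.sublist (by simp), hc.1⟩, ?_, by simp⟩,
    ⟨⟨by simp, hn.sublist (by simp), hc.2⟩, rfl, ?_⟩⟩
  · cases p₁ <;> simpa using hh
  · simpa [List.getLast?_append] using hl

theorem IsDipathFromTo.exists_prefix (h : IsDipathFromTo R p a b) (hx : x ∈ p) :
    ∃ q, IsDipathFromTo R q a x ∧ (∀ y ∈ q, y ∈ p) ∧ (x ≠ b → b ∉ q) := by
  obtain ⟨p₁, p₂, rfl⟩ := List.append_of_mem hx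
  refine ⟨p₁ ++ [x], h.split.1, fun y hy => ?_, fun hxb hb => ?_⟩
  · simp only [List.mem_append, List.mem_cons] at hy ⊢; tauto
  have hb' : b ∈ x :: p₂ := h.split.2.last_mem
  have := h.nodup
  simp only [List.mem_append, List.mem_singleton] at hb
  grind

theorem IsDipathFromTo.exists_suffix (h : IsDipathFromTo R p a b) (hx : x ∈ p) :
    ∃ q, IsDipathFromTo R q x b ∧ (∀ y ∈ q, y ∈ p) ∧ (x ≠ a → a ∉ q) := by
  obtain ⟨p₁, p₂, rfl⟩ := List.append_of_mem hx
  refine ⟨x :: p₂, h.split.2, by simp +contextual, fun hxa ha => ?_⟩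
  have ha' : a ∈ p₁ ++ [x] := h.split.1.head_mem
  have := h.nodup
  simp only [List.mem_append, List.mem_singleton] at ha'
  grind

theorem ReachIn.exists_dipath (h : ReachIn R S a b) (ha : a ∈ S) :
    ∃ p, IsDipathFromTo R p a b ∧ ∀ x ∈ p, x ∈ S := by
  induction h using Relation.ReflTransGen.head_induction_on with
  | refl => exact ⟨[b], isDipathFromTo_singleton b, by simpa using ha⟩
  | @head a y hstep _ ih =>
    obtain ⟨q, hq, hqS⟩ := ih hstep.2.2
    by_cases haq : a ∈ q
    · obtain ⟨q', hq', hq'q, -⟩ := hq.exists_suffix haq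
      exact ⟨q', hq', fun z hz => hqS z (hq'q z hz)⟩
    · exact ⟨a :: q, hq.cons hstep.1 haq, by simpa [ha] using hqS⟩

theorem Reach.exists_dipath (h : Reach R a b) : ∃ p, IsDipathFromTo R p a b := by
  have h' : ReachIn R univ a b := Relation.ReflTransGen.mono (fun _ _ h' => ⟨h', by simp⟩) _ _ h
  obtain ⟨p, hp, -⟩ := h'.exists_dipath (mem_univ a)
  exact ⟨p, hp⟩

end Dipaths

section Menger

variable {c : ℕ} {R R' : Finset (Fin c × Fin c)} {A B S T X X' Y Y' : Finset (Fin c)}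
  {a b s u v : Fin c}

def Separates (R : Finset (Fin c × Fin c)) (A B S : Finset (Fin c)) : Prop :=
  ∀ a ∈ A, a ∉ S → ∀ b ∈ B, ¬ ReachIn R Sᶜ a b

/-- A connection from `A` to `B` is recorded as a vertex set containing a walk from `A` to `B`:
Menger's theorem only needs disjointness of these sets, and dipaths are extracted when needed. -/
def Connects (R : Finset (Fin c × Fin c)) (A B X : Finset (Fin c)) : Prop :=
  ∃ a ∈ A, ∃ b ∈ B, a ∈ X ∧ ReachIn R X a b

theorem Connects.mono (h : Connects R A B X) (hR : R ⊆ R') : Connects R' A B X :=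
  let ⟨a, ha, b, hb, haX, hab⟩ := h
  ⟨a, ha, b, hb, haX, hab.mono hR subset_rfl⟩

theorem Separates.insert_arc (hS : Separates R A B S) :
    Separates (insert (u, v) R) A B (insert u S) := by
  refine fun a ha haS b hb hab => hS a ha (fun h => haS (mem_insert_of_mem h)) b hb
    (Relation.ReflTransGen.mono (fun x y hxy => ?_) _ _ hab)
  simp only [mem_insert, mem_compl, Prod.mk.injEq, not_or] at hxy ⊢
  tauto

theorem Separates.not_reachIn_erase (hS : Separates R A B {s}) (ha : a ∈ A) (has : a ≠ s)
    (hb : b ∈ B) : ¬ ReachIn R (T.erase s) a b := fun h =>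
  hS a ha (by simpa using has) b hb (h.mono subset_rfl fun x hx => by simp [ne_of_mem_erase hx])

theorem Separates.of_pair_left (hS : Separates R A B {s}) (hT : Separates R A {s, u} T) :
    Separates (insert (u, v) R) A B T := by
  intro a ha haT b hb hab
  rcases hab.of_insert with hab | ⟨hau, -⟩
  · rcases hab.erase_or s with hab | ⟨has, -⟩
    · by_cases has : a = s
      · exact hT a ha haT s (by simp) (has ▸ .refl)
      exact hS.not_reachIn_erase ha has hb hab
    · exact hT a ha haT s (by simp) has
  · exact hT a ha haT u (by simp) hau

theorem Separates.of_pair_right (hS : Separates R A B {s}) (hT : Separates R {s, v} B T) :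
    Separates (insert (u, v) R) A B T := by
  intro a ha haT b hb hab
  have hbT : b ∉ T := by simpa using hab.mem_right (by simpa using haT)
  rcases hab.of_insert with hab | ⟨-, hvb⟩
  · rcases hab.erase_or s with hab' | ⟨has, hsb⟩
    · by_cases has : a = s
      · exact hT a (by simp [has]) haT b hb hab
      exact hS.not_reachIn_erase ha has hb hab'
    · exact hT s (by simp) (by simpa using has.mem_right (by simpa using haT)) b hb hsb
  · have hvT : v ∉ T := fun hvT => hbT (hvb.eq_of_notMem (by simpa using hvT) ▸ hvT)
    exact hT v (by simp) hvT b hb hvb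

/-- A common vertex `z ≠ s` would give a walk from `A` to `B` avoiding `s`: the part of `p` up to
`z`, then the part of `q` from `z`. -/
theorem Separates.eq_of_mem_of_mem (hS : Separates R A B {s}) {p q : List (Fin c)} {x y z : Fin c}
    (hp : IsDipathFromTo R p a x) (ha : a ∈ A) (hps : s ∈ p → s = x)
    (hq : IsDipathFromTo R q y b) (hb : b ∈ B) (hqs : s ∈ q → s = y)
    (hzp : z ∈ p) (hzq : z ∈ q) : z = s := by
  by_contra hzs
  obtain ⟨p', hp', hp'p, hxp'⟩ := hp.exists_prefix hzp
  obtain ⟨q', hq', hq'q, hyq'⟩ := hq.exists_suffix hzq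
  have hp's : ∀ w ∈ p', w ∈ ({s}ᶜ : Finset (Fin c)) := by
    intro w hw
    rw [mem_compl, mem_singleton]
    rintro rfl
    obtain rfl := hps (hp'p _ hw)
    exact hxp' hzs hw
  have hq's : ∀ w ∈ q', w ∈ ({s}ᶜ : Finset (Fin c)) := by
    intro w hw
    rw [mem_compl, mem_singleton]
    rintro rfl
    obtain rfl := hqs (hq'q _ hw)
    exact hyq' hzs hw
  exact hS a ha (mem_compl.1 (hp's a hp'.head_mem)) b hb
    ((hp'.reachIn hp's).trans (hq'.reachIn hq's))

theorem exists_disjoint_of_exists_mem_pair {α : Type*} [DecidableEq α] {P : Finset α → α → Prop}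
    (hP : ∀ X x, P X x → x ∈ X) {X Y : Finset α} {x y : α} (hXY : Disjoint X Y)
    (hX : ∃ z ∈ ({x, y} : Finset α), P X z) (hY : ∃ z ∈ ({x, y} : Finset α), P Y z) :
    ∃ X' Y', Disjoint X' Y' ∧ P X' x ∧ P Y' y := by
  obtain ⟨z, hz, hXz⟩ := hX
  obtain ⟨z', hz', hYz'⟩ := hY
  have hzz' : z ≠ z' := fun h => disjoint_left.1 hXY (hP _ _ hXz) (h ▸ hP _ _ hYz')
  simp only [mem_insert, mem_singleton] at hz hz'
  rcases hz with rfl | rfl <;> rcases hz' with rfl | rfl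
  · exact absurd rfl hzz'
  · exact ⟨X, Y, hXY, hXz, hYz'⟩
  · exact ⟨Y, X, hXY.symm, hYz', hXz⟩
  · exact absurd rfl hzz'

theorem Connects.exists_pair_right {x y : Fin c} (hXY : Disjoint X Y) (hX : Connects R A {x, y} X)
    (hY : Connects R A {x, y} Y) :
    ∃ X' Y', Disjoint X' Y' ∧ (∃ a ∈ A, a ∈ X' ∧ ReachIn R X' a x) ∧
      (∃ a ∈ A, a ∈ Y' ∧ ReachIn R Y' a y) :=
  exists_disjoint_of_exists_mem_pair (P := fun X b => ∃ a ∈ A, a ∈ X ∧ ReachIn R X a b)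
    (fun _ _ ⟨_, _, haX, hab⟩ => hab.mem_right haX) hXY
    (let ⟨a, ha, b, hb, h⟩ := hX; ⟨b, hb, a, ha, h⟩) (let ⟨a, ha, b, hb, h⟩ := hY; ⟨b, hb, a, ha, h⟩)

theorem Connects.exists_pair_left {x y : Fin c} (hXY : Disjoint X Y) (hX : Connects R {x, y} B X)
    (hY : Connects R {x, y} B Y) :
    ∃ X' Y', Disjoint X' Y' ∧ (∃ b ∈ B, x ∈ X' ∧ ReachIn R X' x b) ∧
      (∃ b ∈ B, y ∈ Y' ∧ ReachIn R Y' y b) :=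
  exists_disjoint_of_exists_mem_pair (P := fun Y a => ∃ b ∈ B, a ∈ Y ∧ ReachIn R Y a b)
    (fun _ _ ⟨_, _, haY, _⟩ => haY) hXY hX hY

/-- The gluing step of Menger's theorem: the new connections run `A → s → B` and
`A → u → v → B`. -/
theorem exists_disjoint_connects_insert (hS : Separates R A B {s}) (hX : Disjoint X X')
    (has : ∃ a ∈ A, a ∈ X ∧ ReachIn R X a s) (hau : ∃ a ∈ A, a ∈ X' ∧ ReachIn R X' a u)
    (hY : Disjoint Y Y')
    (hsb : ∃ b ∈ B, s ∈ Y ∧ ReachIn R Y s b) (hvb : ∃ b ∈ B, v ∈ Y' ∧ ReachIn R Y' v b) :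
    ∃ Z Z', Disjoint Z Z' ∧ Connects (insert (u, v) R) A B Z ∧
      Connects (insert (u, v) R) A B Z' := by
  obtain ⟨a, ha, haX, has⟩ := has
  obtain ⟨a', ha', ha'X', ha'u⟩ := hau
  obtain ⟨b, hb, hsY, hsb⟩ := hsb
  obtain ⟨b', hb', hvY', hvb'⟩ := hvb
  obtain ⟨ps, hps, hpsX⟩ := has.exists_dipath haX
  obtain ⟨pu, hpu, hpuX'⟩ := ha'u.exists_dipath ha'X'
  obtain ⟨qs, hqs, hqsY⟩ := hsb.exists_dipath hsY
  obtain ⟨qv, hqv, hqvY'⟩ := hvb'.exists_dipath hvY'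
  have hspu : s ∉ pu := fun h => disjoint_left.1 hX (has.mem_right haX) (hpuX' s h)
  have hsqv : s ∉ qv := fun h => disjoint_left.1 hY hsY (hqvY' s h)
  have hpsqv : ∀ z ∈ ps, z ∉ qv := fun z hzs hzv => hsqv <|
    hS.eq_of_mem_of_mem hps ha (fun _ => rfl) hqv hb' (absurd · hsqv) hzs hzv ▸ hzv
  have hpuqs : ∀ z ∈ pu, z ∉ qs := fun z hzu hzs => hspu <|
    hS.eq_of_mem_of_mem hpu ha' (absurd · hspu) hqs hb (fun _ => rfl) hzu hzs ▸ hzu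
  refine ⟨ps.toFinset ∪ qs.toFinset, pu.toFinset ∪ qv.toFinset, ?_,
    ⟨a, ha, b, hb, by simp [hps.head_mem], ?_⟩, ⟨a', ha', b', hb', by simp [hpu.head_mem], ?_⟩⟩
  · rw [disjoint_union_left, disjoint_union_right, disjoint_union_right]
    simp only [disjoint_left, List.mem_toFinset]
    exact ⟨⟨fun z hz hz' => disjoint_left.1 hX (hpsX z hz) (hpuX' z hz'), hpsqv⟩,
      fun z hz hz' => hpuqs z hz' hz, fun z hz hz' => disjoint_left.1 hY (hqsY z hz) (hqvY' z hz')⟩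
  · exact ((hps.reachIn fun x hx => by simp [hx]).trans
      (hqs.reachIn fun x hx => by simp [hx])).mono (subset_insert _ _) subset_rfl
  · refine ((hpu.reachIn fun x hx => by simp [hx]).mono (subset_insert _ _) subset_rfl).trans
      (.head ⟨mem_insert_self _ _, by simp [hpu.last_mem], by simp [hqv.head_mem]⟩
        ((hqv.reachIn fun x hx => by simp [hx]).mono (subset_insert _ _) subset_rfl))

/-- Induction on the arcs: if deleting the arc `(u, v)` leaves a one-vertex separator `{s}`, glue
the disjoint connections from `A` to `{s, u}` and from `{s, v}` to `B` given by induction. -/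
theorem menger_two (R : Finset (Fin c × Fin c)) (A B : Finset (Fin c))
    (hsep : ∀ S, Separates R A B S → 2 ≤ S.card) :
    ∃ X Y, Disjoint X Y ∧ Connects R A B X ∧ Connects R A B Y := by
  induction R using Finset.induction_on generalizing A B with
  | empty =>
    have hAB : ∀ S : Finset (Fin c), S.card < 2 → ∃ a ∈ A, a ∉ S ∧ a ∈ B := fun S hS => by
      by_contra! h
      exact hS.not_ge (hsep S fun a ha haS b hb hab => h a ha haS (hab.eq_of_empty ▸ hb))
    obtain ⟨a, ha, -, haB⟩ := hAB ∅ (by simp)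
    obtain ⟨a', ha', ha'a, ha'B⟩ := hAB {a} (by simp)
    exact ⟨{a}, {a'}, disjoint_singleton.2 fun h => ha'a (h ▸ mem_singleton_self a),
      ⟨a, ha, a, haB, mem_singleton_self a, .refl⟩, ⟨a', ha', a', ha'B, mem_singleton_self a', .refl⟩⟩
  | @insert e R _ ih =>
    obtain ⟨u, v⟩ := e
    by_cases hR : ∀ S, Separates R A B S → 2 ≤ S.card
    · obtain ⟨X, Y, hXY, hX, hY⟩ := ih A B hR
      exact ⟨X, Y, hXY, hX.mono (subset_insert _ _), hY.mono (subset_insert _ _)⟩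
    push Not at hR
    obtain ⟨S, hS, hS2⟩ := hR
    obtain ⟨s, rfl⟩ : ∃ s, S = {s} := by
      have := hsep _ (hS.insert_arc (v := v))
      have := card_insert_le u S
      exact card_eq_one.1 (by omega)
    obtain ⟨X₀, X₀', hX₀, hX₀c, hX₀'c⟩ := ih A {s, u} fun T hT => hsep T (hS.of_pair_left hT)
    obtain ⟨X, X', hX, hXs, hXu⟩ := Connects.exists_pair_right hX₀ hX₀c hX₀'c
    obtain ⟨Y₀, Y₀', hY₀, hY₀c, hY₀'c⟩ := ih {s, v} B fun T hT => hsep T (hS.of_pair_right hT)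
    obtain ⟨Y, Y', hY, hYs, hYv⟩ := Connects.exists_pair_left hY₀ hY₀c hY₀'c
    exact exists_disjoint_connects_insert hS hX hXs hXu hY hYs hYv

end Menger

section Fan

variable {c : ℕ} {R : Finset (Fin c × Fin c)} {S : Finset (Fin c)} {a b i j r : Fin c}
  {p : List (Fin c)}

def deleteVertex (R : Finset (Fin c × Fin c)) (i : Fin c) : Finset (Fin c × Fin c) :=
  R.filter fun e => e.1 ≠ i ∧ e.2 ≠ i

def outNeighbors (R : Finset (Fin c × Fin c)) (i : Fin c) : Finset (Fin c) :=
  univ.filter fun a => (i, a) ∈ R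

theorem mem_deleteVertex {e : Fin c × Fin c} :
    e ∈ deleteVertex R i ↔ e ∈ R ∧ e.1 ≠ i ∧ e.2 ≠ i :=
  mem_filter

theorem mem_outNeighbors : a ∈ outNeighbors R i ↔ (i, a) ∈ R := by
  simp [outNeighbors]

theorem ReachIn.deleteVertex_of_notMem (h : ReachIn R S a b) (hi : i ∉ S) :
    ReachIn (deleteVertex R i) S a b :=
  Relation.ReflTransGen.mono (fun _ _ ⟨hxy, hx, hy⟩ =>
    ⟨mem_deleteVertex.2 ⟨hxy, ne_of_mem_of_not_mem hx hi, ne_of_mem_of_not_mem hy hi⟩, hx, hy⟩)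
    _ _ h

theorem ReachIn.of_deleteVertex (h : ReachIn (deleteVertex R i) S a b) :
    ReachIn R (S.erase i) a b :=
  Relation.ReflTransGen.mono (fun _ _ ⟨hxy, hx, hy⟩ =>
    have hxy := mem_deleteVertex.1 hxy
    ⟨hxy.1, mem_erase.2 ⟨hxy.2.1, hx⟩, mem_erase.2 ⟨hxy.2.2, hy⟩⟩) _ _ h

theorem IsDipathFromTo.exists_tail (hp : IsDipathFromTo R p i b) (hib : i ≠ b) :
    ∃ a q, (i, a) ∈ R ∧ IsDipathFromTo R q a b ∧ i ∉ q ∧ ∀ x ∈ q, x ∈ p := by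
  rcases p with _ | ⟨x, _ | ⟨a, t⟩⟩
  · exact absurd rfl hp.1.1
  · obtain ⟨⟨-, -, -⟩, hh, hl⟩ := hp
    simp only [List.head?_cons, List.getLast?_singleton, Option.some.injEq] at hh hl
    exact absurd (hh.symm.trans hl) hib
  · obtain rfl : x = i := by simpa using hp.2.1
    exact ⟨a, a :: t, (List.isChain_cons_cons.1 hp.isChain).1,
      (show IsDipathFromTo R ([x] ++ a :: t) x b from hp).split.2, (List.nodup_cons.1 hp.nodup).1,
      fun y hy => List.mem_cons_of_mem _ hy⟩

theorem exists_cons_dipath_of_reachIn_deleteVertex {X : Finset (Fin c)} (hia : (i, a) ∈ R)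
    (haX : a ∈ X) (hab : ReachIn (deleteVertex R i) X a b) (hbi : b ≠ i) :
    ∃ p, IsDipathFromTo R (i :: p) i b ∧ ∀ x ∈ p, x ∈ X := by
  have hab := hab.of_deleteVertex
  have ha : a ∈ X.erase i := by
    by_contra ha
    obtain rfl := hab.eq_of_notMem ha
    exact ha (mem_erase.2 ⟨hbi, haX⟩)
  obtain ⟨p, hp, hpX⟩ := hab.exists_dipath ha
  exact ⟨p, hp.cons hia fun hi => by simpa using hpX i hi, fun x hx => mem_of_mem_erase (hpX x hx)⟩

/-- A separator `S ⊆ {w, i}` with `w ≠ i` misses the tail, after `i`, of a dipath from `i` to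
`{j, r}` avoiding `w`. -/
theorem two_le_card_of_separates_outNeighbors (hij : i ≠ j) (hir : i ≠ r)
    (hcut : ∀ v, v ≠ i → ReachIn R {v}ᶜ i j ∨ ReachIn R {v}ᶜ i r)
    (hS : Separates (deleteVertex R i) (outNeighbors R i) {j, r} S) : 2 ≤ S.card := by
  by_contra! hS2
  have : Nonempty (Fin c) := ⟨i⟩
  obtain ⟨v, hSv⟩ := card_le_one_iff_subset_singleton.1 (by omega : S.card ≤ 1)
  obtain ⟨w, hwi, hSw⟩ : ∃ w, w ≠ i ∧ S ⊆ {w, i} := by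
    by_cases hvi : v = i
    · exact ⟨r, hir.symm, hSv.trans (by simp [hvi])⟩
    · exact ⟨v, hvi, hSv.trans (by simp)⟩
  obtain ⟨b, hb, hib⟩ : ∃ b ∈ ({j, r} : Finset (Fin c)), ReachIn R {w}ᶜ i b :=
    (hcut w hwi).elim (⟨j, by simp, ·⟩) (⟨r, by simp, ·⟩)
  obtain ⟨p, hp, hpw⟩ := hib.exists_dipath (by simpa using hwi.symm)
  obtain ⟨a, q, hia, hq, hiq, hqp⟩ := hp.exists_tail (by
    simp only [mem_insert, mem_singleton] at hb; rcases hb with rfl | rfl <;> assumption)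
  have hqS : ∀ x ∈ q, x ∈ (Sᶜ).erase i := fun x hx => by
    have hxw := hpw x (hqp x hx)
    have hxi : x ≠ i := fun h => hiq (h ▸ hx)
    simp only [mem_erase, mem_compl, mem_singleton] at hxw ⊢
    exact ⟨hxi, fun hxS => by simpa [hxw, hxi] using hSw hxS⟩
  exact hS a (mem_outNeighbors.2 hia) (by simpa using (mem_erase.1 (hqS a hq.head_mem)).2)
    b hb ((hq.reachIn hqS).deleteVertex_of_notMem (notMem_erase i _) |>.mono subset_rfl (erase_subset _ _))

/-- Menger's theorem applied to the out-neighbours of `i` and to `{j, r}` in the graph with `i`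
deleted. -/
theorem exists_dipaths_inter_eq_singleton (hij : i ≠ j) (hir : i ≠ r)
    (hcut : ∀ v, v ≠ i → ReachIn R {v}ᶜ i j ∨ ReachIn R {v}ᶜ i r) :
    ∃ pj pc, IsDipathFromTo R pj i j ∧ IsDipathFromTo R pc i r ∧
      pj.toFinset ∩ pc.toFinset = {i} := by
  obtain ⟨X₀, Y₀, hXY₀, hX₀, hY₀⟩ :=
    menger_two _ _ _ fun S => two_le_card_of_separates_outNeighbors hij hir hcut
  obtain ⟨X, Y, hXY, ⟨a, ha, haX, haj⟩, ⟨a', ha', ha'Y, ha'r⟩⟩ :=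
    Connects.exists_pair_right hXY₀ hX₀ hY₀
  obtain ⟨pj, hpj, hpjX⟩ :=
    exists_cons_dipath_of_reachIn_deleteVertex (mem_outNeighbors.1 ha) haX haj hij.symm
  obtain ⟨pc, hpc, hpcY⟩ :=
    exists_cons_dipath_of_reachIn_deleteVertex (mem_outNeighbors.1 ha') ha'Y ha'r hir.symm
  refine ⟨i :: pj, i :: pc, hpj, hpc, ?_⟩
  ext x
  simp only [List.toFinset_cons, mem_inter, mem_insert, List.mem_toFinset, mem_singleton]
  have := fun hx hx' => disjoint_left.1 hXY (hpjX x hx) (hpcY x hx')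
  tauto

end Fan

section Uset

variable {c : ℕ} {R : Finset (Fin c × Fin c)} {r i k v x y z : Fin c}

theorem mem_Uset : k ∈ Uset R r i ↔ ∀ p, IsDipathFromTo R p k r → i ∈ p := by
  simp [Uset]

theorem mem_Uset_iff_reachIn : k ∈ Uset R r i ↔ k = i ∨ ¬ ReachIn R {i}ᶜ k r := by
  rw [mem_Uset]
  refine ⟨fun h => or_iff_not_imp_left.2 fun hki hk => ?_, fun h p hp => ?_⟩
  · obtain ⟨p, hp, hpi⟩ := hk.exists_dipath (by simpa using hki)
    simpa using hpi i (h p hp)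
  · rcases h with rfl | h
    · exact hp.head_mem
    · by_contra hip
      exact h (hp.reachIn fun x hx => by simpa using ne_of_mem_of_not_mem hx hip)

theorem mem_Uset_self : i ∈ Uset R r i :=
  mem_Uset.2 fun _ hp => hp.head_mem

theorem mem_Uset_trans (hk : k ∈ Uset R r v) (hv : v ∈ Uset R r y) : k ∈ Uset R r y :=
  mem_Uset.2 fun p hp => by
    obtain ⟨q, hq, hqp, -⟩ := hp.exists_suffix (mem_Uset.1 hk p hp)
    exact hqp y (mem_Uset.1 hv q hq)

theorem eq_of_mem_Uset_of_mem_Uset (hx : Reach R x r) (hxy : x ∈ Uset R r y)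
    (hyx : y ∈ Uset R r x) : x = y := by
  by_contra hne
  obtain ⟨p, hp⟩ := hx.exists_dipath
  obtain ⟨q, hq, -, hxq⟩ := hp.exists_suffix (mem_Uset.1 hxy p hp)
  exact hxq (Ne.symm hne) (mem_Uset.1 hyx q hq)

/-- A dipath from `z` to `r` passes through `x` and `y`; whichever comes first is dominated by the
other one. -/
theorem mem_Uset_or_mem_Uset (hz : Reach R z r) (hzx : z ∈ Uset R r x) (hzy : z ∈ Uset R r y) :
    x ∈ Uset R r y ∨ y ∈ Uset R r x := by
  rcases eq_or_ne z x with rfl | hzx'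
  · exact Or.inl hzy
  rcases eq_or_ne z y with rfl | hzy'
  · exact Or.inr hzx
  obtain ⟨p, hp⟩ := hz.exists_dipath
  obtain ⟨px, hpx, -, -⟩ := hp.exists_prefix (mem_Uset.1 hzx p hp)
  simp only [mem_Uset_iff_reachIn, hzx', hzy', false_or] at hzx hzy ⊢
  by_contra! h
  by_cases hy : y ∈ px
  · obtain ⟨py, hpy, -, hxpy⟩ := hpx.exists_prefix hy
    exact hzx ((hpy.reachIn fun w hw => by
      simpa using ne_of_mem_of_not_mem hw (hxpy h.2.1)).trans h.2.2)
  · exact hzy ((hpx.reachIn fun w hw => by simpa using ne_of_mem_of_not_mem hw hy).trans h.1.2)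

end Uset

section Partition

variable {c : ℕ} {R : Finset (Fin c × Fin c)} {r i v w x : Fin c} {U I : Finset (Fin c)}

noncomputable def UsetMaximals (R : Finset (Fin c × Fin c)) (r : Fin c) (U : Finset (Fin c)) :
    Finset (Fin c) :=
  @Finset.filter _ (fun x => ∀ y ∈ U, x ∈ Uset R r y → x = y) (Classical.decPred _) U

theorem mem_UsetMaximals :
    x ∈ UsetMaximals R r U ↔ x ∈ U ∧ ∀ y ∈ U, x ∈ Uset R r y → x = y := by
  simp [UsetMaximals]

/-- Take `x` with `w ∈ U(x)` and `U(x)` as large as possible. -/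
theorem exists_mem_UsetMaximals (hreach : ∀ k, Reach R k r) (hw : w ∈ U) :
    ∃ x ∈ UsetMaximals R r U, w ∈ Uset R r x := by
  classical
  obtain ⟨x, hx, hmax⟩ := exists_max_image (U.filter (w ∈ Uset R r ·)) (Uset R r · |>.card)
    ⟨w, mem_filter.2 ⟨hw, mem_Uset_self⟩⟩
  obtain ⟨hxU, hwx⟩ := mem_filter.1 hx
  refine ⟨x, mem_UsetMaximals.2 ⟨hxU, fun y hy hxy => ?_⟩, hwx⟩
  have hsub : Uset R r x ⊆ Uset R r y := fun z hz => mem_Uset_trans hz hxy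
  have heq := eq_of_subset_of_card_le hsub (hmax y (mem_filter.2 ⟨hy, mem_Uset_trans hwx hxy⟩))
  exact eq_of_mem_Uset_of_mem_Uset (hreach x) hxy (heq ▸ mem_Uset_self)

theorem isPartitionInto_UsetMaximals (hreach : ∀ k, Reach R k r) (hU : U ⊆ univ.erase r)
    (hclosed : ∀ x ∈ U, Uset R r x ⊆ U) : IsPartitionInto R r U (UsetMaximals R r U) := by
  refine ⟨fun x hx => hU (mem_UsetMaximals.1 hx).1, fun x hx y hy hxy => ?_, ?_⟩
  · obtain ⟨hxU, hxmax⟩ := mem_UsetMaximals.1 hx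
    obtain ⟨hyU, hymax⟩ := mem_UsetMaximals.1 hy
    refine disjoint_left.2 fun z hzx hzy => ?_
    rcases mem_Uset_or_mem_Uset (hreach z) hzx hzy with h | h
    · exact hxy (hxmax y hyU h)
    · exact hxy (hymax x hxU h).symm
  · ext w
    rw [mem_biUnion]
    exact ⟨exists_mem_UsetMaximals hreach,
      fun ⟨x, hx, hwx⟩ => hclosed x (mem_UsetMaximals.1 hx).1 hwx⟩

theorem IsPartitionInto.eq_of_mem_Uset (hreach : ∀ k, Reach R k r) (hP : IsPartitionInto R r U I)
    (hi : i ∈ I) (hv : v ∈ U) (hiv : i ∈ Uset R r v) : v = i := by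
  obtain ⟨y, hy, hvy⟩ := mem_biUnion.1 (hP.2.2 ▸ hv)
  obtain rfl : y = i := by
    by_contra hyi
    exact disjoint_left.1 (hP.2.1 hi hy (Ne.symm hyi)) mem_Uset_self (mem_Uset_trans hiv hvy)
  exact eq_of_mem_Uset_of_mem_Uset (hreach v) hvy hiv

end Partition

section UsetOf

variable {c : ℕ} {R : Finset (Fin c × Fin c)} {F : Finset (Fin c)} {r j k w x : Fin c}

/-- `U(F)`: the vertices all of whose dipaths to `r` meet `F`. -/
noncomputable def UsetOf (R : Finset (Fin c × Fin c)) (r : Fin c) (F : Finset (Fin c)) :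
    Finset (Fin c) :=
  @Finset.filter _ (fun k => k ∈ F ∨ ¬ ReachIn R Fᶜ k r) (Classical.decPred _) univ

theorem mem_UsetOf : k ∈ UsetOf R r F ↔ k ∈ F ∨ ¬ ReachIn R Fᶜ k r := by
  simp [UsetOf]

theorem subset_UsetOf : F ⊆ UsetOf R r F :=
  fun _ hk => mem_UsetOf.2 (Or.inl hk)

theorem notMem_UsetOf (hk : ReachIn R Fᶜ k r) (hkF : k ∈ Fᶜ) : k ∉ UsetOf R r F := by
  simpa [mem_UsetOf, hk] using hkF

theorem Uset_subset_UsetOf (hx : x ∈ UsetOf R r F) : Uset R r x ⊆ UsetOf R r F := by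
  intro z hz
  rcases mem_Uset_iff_reachIn.1 hz with rfl | hz
  · exact hx
  refine mem_UsetOf.2 (or_iff_not_imp_left.2 fun hzF hzr => ?_)
  rcases hzr.erase_or x with h | ⟨hzx, hxr⟩
  · exact hz (h.mono subset_rfl fun y hy => by simp [ne_of_mem_erase hy])
  · have hxF : x ∈ Fᶜ := hzx.mem_right (mem_compl.2 hzF)
    exact notMem_UsetOf hxr hxF hx

theorem reachIn_UsetOf (hFj : ∀ x ∈ F, ReachIn R F x j) (hw : Reach R w r)
    (hwU : w ∈ UsetOf R r F) : ReachIn R (UsetOf R r F) w j := by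
  induction hw using Relation.ReflTransGen.head_induction_on with
  | refl =>
    rcases mem_UsetOf.1 hwU with hrF | hr
    · exact (hFj r hrF).mono subset_rfl subset_UsetOf
    · exact absurd .refl hr
  | @head w y hwy _ ih =>
    by_cases hwF : w ∈ F
    · exact (hFj w hwF).mono subset_rfl subset_UsetOf
    have hw := (mem_UsetOf.1 hwU).resolve_left hwF
    have hyU : y ∈ UsetOf R r F := by
      by_contra hyU
      obtain ⟨hyF, hyr⟩ := not_or.1 (mt mem_UsetOf.2 hyU)
      exact hw (.head ⟨hwy, mem_compl.2 hwF, mem_compl.2 hyF⟩ (not_not.1 hyr))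
    exact .head ⟨hwy, hwU, hyU⟩ (ih hyU)

theorem reachIn_compl_UsetOf (hw : ReachIn R Fᶜ w r) : ReachIn R (UsetOf R r F)ᶜ w r := by
  induction hw using Relation.ReflTransGen.head_induction_on with
  | refl => exact .refl
  | head hstep hrest ih =>
    exact .head ⟨hstep.1, mem_compl.2 (notMem_UsetOf (.head hstep hrest) hstep.2.1),
      mem_compl.2 (notMem_UsetOf hrest hstep.2.2)⟩ ih

theorem jinarb_UsetOf (hreach : ∀ k, Reach R k r) (hrF : r ∉ F)
    (hFj : ∀ x ∈ F, ReachIn R F x j) : Jinarb R r j (UsetOf R r F) := by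
  refine ⟨fun k hk => mem_erase.2 ⟨?_, mem_univ k⟩, fun k hk => reachIn_UsetOf hFj (hreach k) hk,
    fun k hk => ?_⟩
  · rintro rfl
    exact notMem_UsetOf .refl (mem_compl.2 hrF) hk
  · obtain ⟨-, hkr⟩ := not_or.1 (mt mem_UsetOf.2 (mem_sdiff.1 hk).2)
    simpa [compl_eq_univ_sdiff] using reachIn_compl_UsetOf (not_not.1 hkr)

end UsetOf

section Wset

variable {c : ℕ} {R : Finset (Fin c × Fin c)} {r i j : Fin c} {pj pc : List (Fin c)}

theorem IsDipathFromTo.eq_of_mem_of_forall_ne {p : List (Fin c)} {a b : Fin c}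
    (habs : ∀ e ∈ R, e.1 ≠ r) (hp : IsDipathFromTo R p a b) (hr : r ∈ p) : r = b := by
  obtain ⟨q, hq, -, -⟩ := hp.exists_suffix hr
  by_contra hrb
  obtain ⟨x, -, hrx, -⟩ := hq.exists_tail hrb
  exact habs _ hrx rfl

theorem dipaths_of_mem_Wset (hreach : ∀ k, Reach R k r) (hi : i ∈ Wset R r j) :
    i ≠ r ∧ ∃ pj pc, IsDipathFromTo R pj i j ∧ IsDipathFromTo R pc i r ∧
      pj.toFinset ∩ pc.toFinset = {i} := by
  obtain ⟨U, I, hU, hP, hiI⟩ := hi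
  have hir : i ≠ r := (mem_erase.1 (hP.1 hiI)).1
  refine ⟨hir, ?_⟩
  rcases eq_or_ne i j with rfl | hij
  · obtain ⟨pc, hpc⟩ := (hreach i).exists_dipath
    exact ⟨[i], pc, isDipathFromTo_singleton i, hpc, by simp [hpc.head_mem]⟩
  refine exists_dipaths_inter_eq_singleton hij hir fun v hvi => ?_
  by_cases hv : ReachIn R {v}ᶜ i r
  · exact Or.inr hv
  have hiU : i ∈ U := hP.2.2 ▸ mem_biUnion.2 ⟨i, hiI, mem_Uset_self⟩
  have hvU : v ∉ U := fun hvU =>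
    hvi (hP.eq_of_mem_Uset hreach hiI hvU (mem_Uset_iff_reachIn.2 (Or.inr hv)))
  exact Or.inl ((hU.2.1 i hiU).mono subset_rfl fun x hx => by
    simpa using ne_of_mem_of_not_mem hx hvU)

/-- The set `U` witnessing `i ∈ W(j)` is `U(F)` for the vertex set `F` of `pj`; `i` is maximal in
it because `pc` leaves `i` without meeting `F` again. -/
theorem mem_Wset_of_dipaths (habs : ∀ e ∈ R, e.1 ≠ r) (hreach : ∀ k, Reach R k r) (hj : j ≠ r)
    (hpj : IsDipathFromTo R pj i j) (hpc : IsDipathFromTo R pc i r)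
    (hint : pj.toFinset ∩ pc.toFinset = {i}) : i ∈ Wset R r j := by
  set F := pj.toFinset
  have hrF : r ∉ F := fun hr => hj (hpj.eq_of_mem_of_forall_ne habs (List.mem_toFinset.1 hr)).symm
  have hU : Jinarb R r j (UsetOf R r F) := jinarb_UsetOf hreach hrF fun x hx => by
    obtain ⟨q, hq, hqpj, -⟩ := hpj.exists_suffix (List.mem_toFinset.1 hx)
    exact hq.reachIn fun y hy => List.mem_toFinset.2 (hqpj y hy)
  refine ⟨UsetOf R r F, _, hU, isPartitionInto_UsetMaximals hreach hU.1
    fun _ => Uset_subset_UsetOf, mem_UsetMaximals.2 ⟨subset_UsetOf ?_, fun y hy hiy => ?_⟩⟩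
  · exact List.mem_toFinset.2 hpj.head_mem
  by_contra hiy'
  obtain ⟨q, hq, hqpc, hiq⟩ := hpc.exists_suffix (mem_Uset.1 hiy pc hpc)
  have hqF : ∀ x ∈ q, x ∈ Fᶜ := fun x hx => mem_compl.2 fun hxF => by
    have hxi : x ∈ F ∩ pc.toFinset := mem_inter.2 ⟨hxF, List.mem_toFinset.2 (hqpc x hx)⟩
    rw [hint, mem_singleton] at hxi
    exact hiq (Ne.symm hiy') (hxi ▸ hx)
  rcases mem_UsetOf.1 hy with hyF | hy
  · exact mem_compl.1 (hqF y hq.head_mem) hyF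
  · exact hy (hq.reachIn hqF)

end Wset

theorem stmt14_general {c : ℕ}
    (R : Finset (Fin c × Fin c))
    -- `{r} = C'` is the vertex set of the unique absorbing strong component (`ℓ = t = 1`):
    (r : Fin c)
    (habs : ∀ p ∈ R, p.1 ≠ r)
    (hreach : ∀ k : Fin c, Reach R k r)
    (j : Fin c) (hj : j ≠ r) :
    Wset R r j =
      {i : Fin c | i ≠ r ∧ ∃ pj pc : List (Fin c),
        IsDipathFromTo R pj i j ∧ IsDipathFromTo R pc i r ∧
          pj.toFinset ∩ pc.toFinset = {i}} := by
  ext i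
  exact ⟨dipaths_of_mem_Wset hreach,
    fun ⟨_, _, _, hpj, hpc, hint⟩ => mem_Wset_of_dipaths habs hreach hj hpj hpc hint⟩

theorem stmt14 {c : ℕ}
    (R : Finset (Fin c × Fin c)) (hloop : ∀ v : Fin c, (v, v) ∉ R)
    -- `{r} = C'` is the vertex set of the unique absorbing strong component (`ℓ = t = 1`):
    (r : Fin c)
    (habs : ∀ p ∈ R, p.1 ≠ r)
    (hreach : ∀ k : Fin c, Reach R k r)
    (hweak : ∀ a b : Fin c,
      Relation.ReflTransGen (fun x y => (x, y) ∈ R ∨ (y, x) ∈ R) a b)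
    (hnsc : ¬ ∀ a b : Fin c, Reach R a b)
    (j : Fin c) (hj : j ≠ r) :
    Wset R r j =
      {i : Fin c | i ≠ r ∧ ∃ pj pc : List (Fin c),
        IsDipathFromTo R pj i j ∧ IsDipathFromTo R pc i r ∧
          pj.toFinset ∩ pc.toFinset = {i}} :=
  stmt14_general R r habs hreach j hj
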